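/- arXiv:2602.16381 — 7 statements merged into one kernel-verified Lean document; each statement's English description precedes it below -/
import Mathlib

section
/- The pair η̄_φ := (η_{A₀} : A₀ → S(A₀), u_{A₀} ⊗ 1_{A₁} : A₁ → S(A₀) ⊗ A₁) is a morphism in the arrow category from φ : A₀ → A₁ to S̄(φ), and these pairs form a natural transformation η̄ : Id ⇒ S̄. Well-definedness follows from the linear rule [D.3]. -/
open CategoryTheory MonoidalCategory

universe v u

/-- A category enriched in commutative monoids (an "additive category" without
biproducts or negatives), with composition preserving sums and zeros. -/
class AdditiveHoms (C : Type u) [Category.{v} C] where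
  homMon : ∀ X Y : C, AddCommMonoid (X ⟶ Y) := by infer_instance
  add_comp : ∀ {X Y Z : C} (f g : X ⟶ Y) (h : Y ⟶ Z), (f + g) ≫ h = f ≫ h + g ≫ h
  comp_add : ∀ {X Y Z : C} (f : X ⟶ Y) (g h : Y ⟶ Z), f ≫ (g + h) = f ≫ g + f ≫ h
  zero_comp' : ∀ {X Y Z : C} (h : Y ⟶ Z), (0 : X ⟶ Y) ≫ h = 0
  comp_zero' : ∀ {X Y Z : C} (f : X ⟶ Y), f ≫ (0 : Y ⟶ Z) = 0

attribute [instance] AdditiveHoms.homMon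

/-- An additive symmetric monoidal category: the tensor preserves the additive
structure in each variable. -/
class AdditiveMonoidal (C : Type u) [Category.{v} C] [MonoidalCategory C] extends
    AdditiveHoms C where
  tensor_add : ∀ {W X Y Z : C} (f : W ⟶ X) (g h : Y ⟶ Z), f ⊗ₘ (g + h) = f ⊗ₘ g + f ⊗ₘ h
  add_tensor : ∀ {W X Y Z : C} (f g : W ⟶ X) (h : Y ⟶ Z), (f + g) ⊗ₘ h = f ⊗ₘ h + g ⊗ₘ h
  tensor_zero : ∀ {W X Y Z : C} (f : W ⟶ X), f ⊗ₘ (0 : Y ⟶ Z) = 0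
  zero_tensor : ∀ {W X Y Z : C} (f : Y ⟶ Z), (0 : W ⟶ X) ⊗ₘ f = 0

/-- A differential modality on an additive symmetric monoidal category: an algebra
modality `(S, μ, η, m, u)` together with a deriving transformation `d` satisfying
the constant rule [D.1], Leibniz rule [D.2], linear rule [D.3], chain rule [D.4]
and interchange rule [D.5]. -/
structure DiffModality (C : Type u) [Category.{v} C] [MonoidalCategory C]
    [SymmetricCategory C] [AdditiveMonoidal C] where
  S : C ⥤ C
  η : ∀ A : C, A ⟶ S.obj A
  μ : ∀ A : C, S.obj (S.obj A) ⟶ S.obj A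
  η_natural : ∀ {A B : C} (f : A ⟶ B), f ≫ η B = η A ≫ S.map f
  μ_natural : ∀ {A B : C} (f : A ⟶ B), S.map (S.map f) ≫ μ B = μ A ≫ S.map f
  left_unit : ∀ A : C, η (S.obj A) ≫ μ A = 𝟙 (S.obj A)
  right_unit : ∀ A : C, S.map (η A) ≫ μ A = 𝟙 (S.obj A)
  μ_assoc : ∀ A : C, S.map (μ A) ≫ μ A = μ (S.obj A) ≫ μ A
  m : ∀ A : C, S.obj A ⊗ S.obj A ⟶ S.obj A
  u : ∀ A : C, 𝟙_ C ⟶ S.obj A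
  m_natural : ∀ {A B : C} (f : A ⟶ B), (S.map f ⊗ₘ S.map f) ≫ m B = m A ≫ S.map f
  u_natural : ∀ {A B : C} (f : A ⟶ B), u A ≫ S.map f = u B
  m_assoc : ∀ A : C, (m A ⊗ₘ 𝟙 (S.obj A)) ≫ m A =
      (α_ (S.obj A) (S.obj A) (S.obj A)).hom ≫ (𝟙 (S.obj A) ⊗ₘ m A) ≫ m A
  m_unit : ∀ A : C, (λ_ (S.obj A)).inv ≫ (u A ⊗ₘ 𝟙 (S.obj A)) ≫ m A = 𝟙 (S.obj A)
  m_comm : ∀ A : C, (β_ (S.obj A) (S.obj A)).hom ≫ m A = m A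
  μ_mul : ∀ A : C, (μ A ⊗ₘ μ A) ≫ m A = m (S.obj A) ≫ μ A
  μ_unit : ∀ A : C, u (S.obj A) ≫ μ A = u A
  d : ∀ A : C, S.obj A ⟶ S.obj A ⊗ A
  d_natural : ∀ {A B : C} (f : A ⟶ B), S.map f ≫ d B = d A ≫ (S.map f ⊗ₘ f)
  d1 : ∀ A : C, u A ≫ d A = 0
  d2 : ∀ A : C, m A ≫ d A =
      (𝟙 (S.obj A) ⊗ₘ d A) ≫ (α_ (S.obj A) (S.obj A) A).inv ≫ (m A ⊗ₘ 𝟙 A)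
      + (d A ⊗ₘ 𝟙 (S.obj A)) ≫ (α_ (S.obj A) A (S.obj A)).hom ≫
          (𝟙 (S.obj A) ⊗ₘ (β_ A (S.obj A)).hom) ≫ (α_ (S.obj A) (S.obj A) A).inv ≫
          (m A ⊗ₘ 𝟙 A)
  d3 : ∀ A : C, η A ≫ d A = (λ_ A).inv ≫ (u A ⊗ₘ 𝟙 A)
  d4 : ∀ A : C, μ A ≫ d A =
      d (S.obj A) ≫ (μ A ⊗ₘ d A) ≫ (α_ (S.obj A) (S.obj A) A).inv ≫ (m A ⊗ₘ 𝟙 A)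
  d5 : ∀ A : C, d A ≫ (d A ⊗ₘ 𝟙 A) =
      d A ≫ (d A ⊗ₘ 𝟙 A) ≫ (α_ (S.obj A) A A).hom ≫
        (𝟙 (S.obj A) ⊗ₘ (β_ A A).hom) ≫ (α_ (S.obj A) A A).inv

variable {C : Type u} [Category.{v} C] [MonoidalCategory C] [SymmetricCategory C]
  [AdditiveMonoidal C]

/-- The lift of the differential modality to arrows: `S̄(φ) = (1 ⊗ φ) ∘ d`. -/
def Sbar (D : DiffModality C) {A₀ A₁ : C} (φ : A₀ ⟶ A₁) :
    D.S.obj A₀ ⟶ D.S.obj A₀ ⊗ A₁ :=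
  D.d A₀ ≫ (𝟙 (D.S.obj A₀) ⊗ₘ φ)

/-- The right component of the lifted monad unit `η̄`: `(u ⊗ 1) ∘ λ⁻¹`. -/
def etaR (D : DiffModality C) (A₀ A₁ : C) : A₁ ⟶ D.S.obj A₀ ⊗ A₁ :=
  (λ_ A₁).inv ≫ (D.u A₀ ⊗ₘ 𝟙 A₁)

/-- The right component of the lifted monad multiplication `μ̄`:
`(m ⊗ 1) ∘ (μ ⊗ 1 ⊗ 1)`. -/
def muR (D : DiffModality C) (A₀ A₁ : C) :
    D.S.obj (D.S.obj A₀) ⊗ (D.S.obj A₀ ⊗ A₁) ⟶ D.S.obj A₀ ⊗ A₁ :=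
  (D.μ A₀ ⊗ₘ 𝟙 (D.S.obj A₀ ⊗ A₁)) ≫ (α_ (D.S.obj A₀) (D.S.obj A₀) A₁).inv ≫
    (D.m A₀ ⊗ₘ 𝟙 A₁)

omit [SymmetricCategory C] [AdditiveMonoidal C] in
private lemma etaR_aux {A B S₀ : C} (g : 𝟙_ C ⟶ S₀) (f : A ⟶ B) :
    (λ_ A).inv ≫ (g ⊗ₘ f) = f ≫ (λ_ B).inv ≫ (g ⊗ₘ 𝟙 B) := by
  have h : g ⊗ₘ f = (𝟙 (𝟙_ C) ⊗ₘ f) ≫ (g ⊗ₘ 𝟙 B) := by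
    rw [MonoidalCategory.tensorHom_comp_tensorHom]; simp
  rw [h]; simp

/-- The pair `η̄_φ = (η, (u ⊗ 1) ∘ λ⁻¹)` is a morphism
`φ ⟶ S̄(φ)` in the arrow category (well-definedness being the linear rule
[D.3]), and these pairs are natural in `φ`. -/
theorem etabar_natural_transformation (D : DiffModality C) :
    (∀ X : Arrow C, D.η X.left ≫ Sbar D X.hom = X.hom ≫ etaR D X.left X.right) ∧
    (∀ (X Y : Arrow C) (f : X ⟶ Y),
      f.left ≫ D.η Y.left = D.η X.left ≫ D.S.map f.left ∧
      f.right ≫ etaR D Y.left Y.right =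
        etaR D X.left X.right ≫ (D.S.map f.left ⊗ₘ f.right)) := by
  constructor
  · intro X
    rw [Sbar, ← Category.assoc, D.d3, etaR]
    simp only [Category.assoc, MonoidalCategory.tensorHom_comp_tensorHom, Category.id_comp,
      Category.comp_id]
    rw [etaR_aux]
  · intro X Y f
    refine ⟨D.η_natural f.left, ?_⟩
    rw [etaR, etaR]
    simp only [Category.assoc, MonoidalCategory.tensorHom_comp_tensorHom, Category.id_comp,
      Category.comp_id, D.u_natural f.left]
    rw [etaR_aux (D.u Y.left) f.right]
end

section
/- The pair μ̄_φ := (μ_{A₀}, (m_{A₀} ⊗ 1_{A₁}) ∘ (μ_{A₀} ⊗ 1_{S(A₀)} ⊗ 1_{A₁})) is a morphism in the arrow category from S̄S̄(φ) to S̄(φ), natural in φ. Well-definedness follows from the chain rule [D.4]. -/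
open CategoryTheory MonoidalCategory

universe v u

variable {C : Type u} [Category.{v} C] [MonoidalCategory C] [SymmetricCategory C]
  [AdditiveMonoidal C]

/-- The pair `μ̄_φ = (μ, (m ⊗ 1) ∘ (μ ⊗ 1 ⊗ 1))` is a morphism
`S̄S̄(φ) ⟶ S̄(φ)` in the arrow category (well-definedness being the chain rule
[D.4]), and these pairs are natural in `φ`. -/
theorem mubar_natural_transformation (D : DiffModality C) :
    (∀ X : Arrow C,
      D.μ X.left ≫ Sbar D X.hom = Sbar D (Sbar D X.hom) ≫ muR D X.left X.right) ∧
    (∀ (X Y : Arrow C) (f : X ⟶ Y),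
      D.S.map (D.S.map f.left) ≫ D.μ Y.left = D.μ X.left ≫ D.S.map f.left ∧
      (D.S.map (D.S.map f.left) ⊗ₘ (D.S.map f.left ⊗ₘ f.right)) ≫ muR D Y.left Y.right =
        muR D X.left X.right ≫ (D.S.map f.left ⊗ₘ f.right)) := by
  constructor
  · intro X
    simp only [Sbar, muR]
    rw [reassoc_of% D.d4 X.left]
    simp only [Category.assoc, Functor.id_obj, MonoidalCategory.tensorHom_def,
      MonoidalCategory.whiskerLeft_comp, MonoidalCategory.comp_whiskerRight,
      MonoidalCategory.whiskerLeft_id, MonoidalCategory.id_whiskerRight,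
      Category.id_comp, Category.comp_id, whisker_exchange_assoc,
      whisker_exchange, associator_inv_naturality_right_assoc,
      MonoidalCategory.whiskerLeft_comp_assoc]
  · intro X Y f
    refine ⟨D.μ_natural f.left, ?_⟩
    simp only [muR]
    have h1 : (D.S.map (D.S.map f.left) ⊗ₘ (D.S.map f.left ⊗ₘ f.right)) ≫
        (D.μ Y.left ⊗ₘ 𝟙 (D.S.obj Y.left ⊗ Y.right)) =
        (D.μ X.left ⊗ₘ 𝟙 (D.S.obj X.left ⊗ X.right)) ≫
          (D.S.map f.left ⊗ₘ (D.S.map f.left ⊗ₘ f.right)) := by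
      rw [tensorHom_comp_tensorHom, tensorHom_comp_tensorHom, Category.comp_id, Category.id_comp,
        D.μ_natural f.left]
    rw [reassoc_of% h1, associator_inv_naturality_assoc, tensorHom_comp_tensorHom,
      Category.comp_id, D.m_natural f.left,
      show ((D.m X.left ≫ D.S.map f.left) ⊗ₘ f.right) =
        (D.m X.left ⊗ₘ 𝟙 X.right) ≫ (D.S.map f.left ⊗ₘ f.right) by
        rw [tensorHom_comp_tensorHom, Category.id_comp]]
    simp only [Category.assoc]
end

section
/- If ((φ : A₀ → A₁), (ν₀, ν₁)) is an S̄-algebra, then ν₁ = ν₁ ∘ (η_{A₀} ⊗ 1_{A₁}) ∘ (ν₀ ⊗ 1_{A₁}), i.e. ν₁ factors through its restriction along η. -/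
open CategoryTheory MonoidalCategory

universe v u

variable {C : Type u} [Category.{v} C] [MonoidalCategory C] [SymmetricCategory C]
  [AdditiveMonoidal C]

/-- An algebra of the lifted monad `S̄` on the arrow category, on the arrow
`φ : A₀ ⟶ A₁`: maps `ν₀ : S(A₀) ⟶ A₀` and `ν₁ : S(A₀) ⊗ A₁ ⟶ A₁` such that
`(ν₀, ν₁) : S̄(φ) ⟶ φ` is an arrow-category map satisfying the unit and
multiplication algebra laws for `S̄`. -/
structure SbarAlgebra (D : DiffModality C) {A₀ A₁ : C} (φ : A₀ ⟶ A₁) where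
  ν₀ : D.S.obj A₀ ⟶ A₀
  ν₁ : D.S.obj A₀ ⊗ A₁ ⟶ A₁
  square : Sbar D φ ≫ ν₁ = ν₀ ≫ φ
  unit₀ : D.η A₀ ≫ ν₀ = 𝟙 A₀
  unit₁ : etaR D A₀ A₁ ≫ ν₁ = 𝟙 A₁
  mul₀ : D.S.map ν₀ ≫ ν₀ = D.μ A₀ ≫ ν₀
  mul₁ : (D.S.map ν₀ ⊗ₘ ν₁) ≫ ν₁ = muR D A₀ A₁ ≫ ν₁

/-- For an `S̄`-algebra `((φ : A₀ → A₁), (ν₀, ν₁))`, we have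
`ν₁ = ν₁ ∘ (η ⊗ 1) ∘ (ν₀ ⊗ 1)`. -/
theorem sbarAlgebra_nu1_factors (D : DiffModality C) {A₀ A₁ : C}
    (φ : A₀ ⟶ A₁) (alg : SbarAlgebra D φ) :
    alg.ν₁ = (alg.ν₀ ⊗ₘ 𝟙 A₁) ≫ (D.η A₀ ⊗ₘ 𝟙 A₁) ≫ alg.ν₁ := by
  obtain ⟨ν₀, ν₁, square, unit₀, unit₁, mul₀, mul₁⟩ := alg
  dsimp only
  have h1 : (𝟙 (D.S.obj A₀) ⊗ₘ ν₁) ≫ ν₁ =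
      (α_ (D.S.obj A₀) (D.S.obj A₀) A₁).inv ≫ (D.m A₀ ⊗ₘ 𝟙 A₁) ≫ ν₁ := by
    have h := congrArg (fun f => (D.S.map (D.η A₀) ⊗ₘ 𝟙 (D.S.obj A₀ ⊗ A₁)) ≫ f) mul₁
    simp only [muR, tensorHom_comp_tensorHom_assoc, Category.id_comp, Category.comp_id,
      ← D.S.map_comp, unit₀, D.S.map_id, D.right_unit, id_tensorHom_id] at h
    simpa [← comp_whiskerRight, ← comp_whiskerRight_assoc, D.right_unit] using h
  have h2 : ((ν₀ ≫ D.η A₀) ⊗ₘ ν₁) ≫ ν₁ =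
      (α_ (D.S.obj A₀) (D.S.obj A₀) A₁).inv ≫ (D.m A₀ ⊗ₘ 𝟙 A₁) ≫ ν₁ := by
    have h := congrArg (fun f => (D.η (D.S.obj A₀) ⊗ₘ 𝟙 (D.S.obj A₀ ⊗ A₁)) ≫ f) mul₁
    simp only [muR, tensorHom_comp_tensorHom_assoc, Category.id_comp, Category.comp_id,
      ← D.η_natural, D.left_unit, id_tensorHom_id] at h
    simpa [← comp_whiskerRight, ← comp_whiskerRight_assoc, D.left_unit] using h
  have h3 : ((ν₀ ≫ D.η A₀) ⊗ₘ ν₁) ≫ ν₁ = (𝟙 (D.S.obj A₀) ⊗ₘ ν₁) ≫ ν₁ := h2.trans h1.symm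
  have h4 := congrArg (fun f => (𝟙 (D.S.obj A₀) ⊗ₘ etaR D A₀ A₁) ≫ f) h3
  simp only [tensorHom_comp_tensorHom_assoc, Category.comp_id, Category.id_comp, unit₁,
    id_tensorHom_id] at h4
  rw [tensorHom_comp_tensorHom_assoc, Category.comp_id]
  exact h4.symm
end

section
/- If ((φ : A₀ → A₁), (ν₀, ν₁)) is an S̄-algebra, then A₁ with the action α_{ν₁} := ν₁ ∘ (η_{A₀} ⊗ 1_{A₁}) : A₀ ⊗ A₁ → A₁ is a module over the commutative monoid (A₀, m^{ν₀}, u^{ν₀}) induced on A₀: α ∘ (u^{ν₀} ⊗ 1) = 1 and α ∘ (1 ⊗ α) = α ∘ (m^{ν₀} ⊗ 1). -/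
open CategoryTheory MonoidalCategory

universe v u

variable {C : Type u} [Category.{v} C] [MonoidalCategory C] [SymmetricCategory C]
  [AdditiveMonoidal C]

section Aux

variable (D : DiffModality C) {A₀ A₁ : C} (φ : A₀ ⟶ A₁) (alg : SbarAlgebra D φ)

/-- Key identity obtained from `mul₁` by precomposing with `η ⊗ 1`. -/
lemma keyK :
    ((alg.ν₀ ≫ D.η A₀) ⊗ₘ alg.ν₁) ≫ alg.ν₁ =
      (α_ (D.S.obj A₀) (D.S.obj A₀) A₁).inv ≫ (D.m A₀ ⊗ₘ 𝟙 A₁) ≫ alg.ν₁ := by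
  have h := congrArg (fun t => (D.η (D.S.obj A₀) ⊗ₘ 𝟙 (D.S.obj A₀ ⊗ A₁)) ≫ t) alg.mul₁
  rw [← Category.assoc, MonoidalCategory.tensorHom_comp_tensorHom, ← D.η_natural alg.ν₀,
    Category.id_comp] at h
  rw [h]
  unfold muR
  slice_lhs 1 2 => rw [MonoidalCategory.tensorHom_comp_tensorHom, D.left_unit, Category.comp_id,
    MonoidalCategory.id_tensorHom_id]
  rw [Category.id_comp, Category.assoc]

/-- Right unit law for the monoid `m` on `S A₀`. -/
lemma m_unit_right (A : C) :
    (ρ_ (D.S.obj A)).inv ≫ (𝟙 (D.S.obj A) ⊗ₘ D.u A) ≫ D.m A = 𝟙 (D.S.obj A) := by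
  rw [← D.m_comm A]
  have hb : (𝟙 (D.S.obj A) ⊗ₘ D.u A) ≫ (β_ (D.S.obj A) (D.S.obj A)).hom =
      (β_ (D.S.obj A) (𝟙_ C)).hom ≫ (D.u A ⊗ₘ 𝟙 (D.S.obj A)) :=
    BraidedCategory.braiding_naturality (𝟙 (D.S.obj A)) (D.u A)
  have hρβ : (ρ_ (D.S.obj A)).inv ≫ (β_ (D.S.obj A) (𝟙_ C)).hom =
      (λ_ (D.S.obj A)).inv := by
    rw [Iso.inv_comp_eq, Iso.eq_comp_inv]
    exact braiding_leftUnitor (D.S.obj A)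
  rw [← Category.assoc (𝟙 (D.S.obj A) ⊗ₘ D.u A), hb]
  rw [Category.assoc, ← Category.assoc (ρ_ (D.S.obj A)).inv, hρβ, ← Category.assoc,
    Category.assoc, D.m_unit A]

/-- `ν₀ ≫ η` acts trivially through `ν₁`. -/
lemma nu_eta_acts :
    ((alg.ν₀ ≫ D.η A₀) ⊗ₘ 𝟙 A₁) ≫ alg.ν₁ = alg.ν₁ := by
  have h := congrArg (fun t => (𝟙 (D.S.obj A₀) ⊗ₘ etaR D A₀ A₁) ≫ t) (keyK D φ alg)
  rw [← Category.assoc, MonoidalCategory.tensorHom_comp_tensorHom, Category.id_comp,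
    alg.unit₁] at h
  rw [h]
  unfold etaR
  rw [MonoidalCategory.id_tensor_comp]
  slice_lhs 2 3 => rw [associator_inv_naturality]
  have htri : (𝟙 (D.S.obj A₀) ⊗ₘ (λ_ A₁).inv) ≫
      (α_ (D.S.obj A₀) (𝟙_ C) A₁).inv = (ρ_ (D.S.obj A₀)).inv ⊗ₘ 𝟙 A₁ := by
    rw [Iso.comp_inv_eq]
    simp
  slice_lhs 1 2 => rw [htri]
  slice_lhs 1 3 => rw [← MonoidalCategory.comp_tensor_id,
    ← MonoidalCategory.comp_tensor_id, m_unit_right, MonoidalCategory.id_tensorHom_id]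
  rw [Category.id_comp]

end Aux

/-- For an `S̄`-algebra `((φ : A₀ → A₁), (ν₀, ν₁))`, the map
`α_{ν₁} := ν₁ ∘ (η ⊗ₘ 1)` makes `A₁` a module over the commutative monoid
`(A₀, m^{ν₀}, u^{ν₀})` induced on `A₀`. -/
theorem sbarAlgebra_module (D : DiffModality C) {A₀ A₁ : C}
    (φ : A₀ ⟶ A₁) (alg : SbarAlgebra D φ) :
    -- α ∘ (u^{ν₀} ⊗ 1) = 1
    (λ_ A₁).inv ≫ ((D.u A₀ ≫ alg.ν₀) ⊗ₘ 𝟙 A₁) ≫ (D.η A₀ ⊗ₘ 𝟙 A₁) ≫ alg.ν₁ = 𝟙 A₁ ∧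
    -- α ∘ (1 ⊗ α) = α ∘ (m^{ν₀} ⊗ 1)
    (𝟙 A₀ ⊗ₘ ((D.η A₀ ⊗ₘ 𝟙 A₁) ≫ alg.ν₁)) ≫ (D.η A₀ ⊗ₘ 𝟙 A₁) ≫ alg.ν₁ =
      (α_ A₀ A₀ A₁).inv ≫ (((D.η A₀ ⊗ₘ D.η A₀) ≫ D.m A₀ ≫ alg.ν₀) ⊗ₘ 𝟙 A₁) ≫
        (D.η A₀ ⊗ₘ 𝟙 A₁) ≫ alg.ν₁ := by
  constructor
  · rw [show (D.u A₀ ≫ alg.ν₀) ⊗ₘ 𝟙 A₁ = (D.u A₀ ⊗ₘ 𝟙 A₁) ≫ (alg.ν₀ ⊗ₘ 𝟙 A₁) from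
      MonoidalCategory.comp_tensor_id _ _, Category.assoc,
      ← Category.assoc (alg.ν₀ ⊗ₘ 𝟙 A₁), ← MonoidalCategory.comp_tensor_id,
      nu_eta_acts D φ alg]
    simpa [etaR] using alg.unit₁
  · have h := congrArg
      (fun t => (D.η A₀ ⊗ₘ ((D.η A₀ ⊗ₘ 𝟙 A₁) : A₀ ⊗ A₁ ⟶ _)) ≫ t) (keyK D φ alg)
    rw [← Category.assoc, MonoidalCategory.tensorHom_comp_tensorHom] at h
    rw [← Category.assoc (D.η A₀), alg.unit₀, Category.id_comp] at h
    rw [← Category.assoc, associator_inv_naturality, Category.assoc,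
      ← Category.assoc ((D.η A₀ ⊗ₘ D.η A₀) ⊗ₘ 𝟙 A₁), ← MonoidalCategory.comp_tensor_id] at h
    calc (𝟙 A₀ ⊗ₘ ((D.η A₀ ⊗ₘ 𝟙 A₁) ≫ alg.ν₁)) ≫ (D.η A₀ ⊗ₘ 𝟙 A₁) ≫ alg.ν₁
        = (D.η A₀ ⊗ₘ ((D.η A₀ ⊗ₘ 𝟙 A₁) ≫ alg.ν₁)) ≫ alg.ν₁ := by
          rw [← Category.assoc, MonoidalCategory.tensorHom_comp_tensorHom, Category.id_comp,
            Category.comp_id]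
      _ = (α_ A₀ A₀ A₁).inv ≫ (((D.η A₀ ⊗ₘ D.η A₀) ≫ D.m A₀) ⊗ₘ 𝟙 A₁) ≫ alg.ν₁ := h
      _ = _ := by
          symm
          congr 1
          rw [← Category.assoc (((D.η A₀ ⊗ₘ D.η A₀) ≫ D.m A₀ ≫ alg.ν₀) ⊗ₘ 𝟙 A₁),
            MonoidalCategory.tensorHom_comp_tensorHom, Category.comp_id]
          rw [show ((D.η A₀ ⊗ₘ D.η A₀) ≫ D.m A₀ ≫ alg.ν₀) ≫ D.η A₀ =
            ((D.η A₀ ⊗ₘ D.η A₀) ≫ D.m A₀) ≫ (alg.ν₀ ≫ D.η A₀) by simp]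
          rw [MonoidalCategory.comp_tensor_id, Category.assoc, nu_eta_acts D φ alg]
end

section
/- If D : (A, ν) → (M, α) is an S-derivation, then ((D : A → M), (ν, ν_α)) with ν_α := α ∘ (ν ⊗ 1_M) is an algebra of the lifted monad S̄ on the arrow category: in particular ν_α ∘ (m ⊗ 1) ∘ (μ ⊗ 1 ⊗ 1) = ν_α ∘ (S(ν) ⊗ ν_α) holds. -/
open CategoryTheory MonoidalCategory

universe v u

variable {C : Type u} [Category.{v} C] [MonoidalCategory C] [SymmetricCategory C]
  [AdditiveMonoidal C]

/-- An `S`-derivation `D : (A, ν) → (M, act)`: a map from an `S`-algebra `(A, ν)`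
to a module `(M, act)` over the induced commutative monoid `(A, m^ν, u^ν)`,
satisfying the chain rule `D ∘ ν = act ∘ (ν ⊗ D) ∘ d`. -/
structure SDerivation (D : DiffModality C) where
  A : C
  M : C
  ν : D.S.obj A ⟶ A
  act : A ⊗ M ⟶ M
  Dmap : A ⟶ M
  alg_unit : D.η A ≫ ν = 𝟙 A
  alg_mul : D.S.map ν ≫ ν = D.μ A ≫ ν
  act_unit : (λ_ M).inv ≫ ((D.u A ≫ ν) ⊗ₘ 𝟙 M) ≫ act = 𝟙 M
  act_assoc : (𝟙 A ⊗ₘ act) ≫ act =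
      (α_ A A M).inv ≫ (((D.η A ⊗ₘ D.η A) ≫ D.m A ≫ ν) ⊗ₘ 𝟙 M) ≫ act
  chain : ν ≫ Dmap = D.d A ≫ (ν ⊗ₘ Dmap) ≫ act

/-- For an `S`-derivation `D : (A, ν) → (M, α)`, the pair
`(ν, ν_α)` with `ν_α := α ∘ (ν ⊗ 1)` makes `(D : A → M)` an algebra of the
lifted monad `S̄`: the arrow-square, unit and multiplication laws all hold, in
particular `ν_α ∘ (m ⊗ 1) ∘ (μ ⊗ 1 ⊗ 1) = ν_α ∘ (S(ν) ⊗ ν_α)`. -/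
theorem derivation_gives_sbarAlgebra (D : DiffModality C) (X : SDerivation D) :
    Sbar D X.Dmap ≫ ((X.ν ⊗ₘ 𝟙 X.M) ≫ X.act) = X.ν ≫ X.Dmap ∧
    D.η X.A ≫ X.ν = 𝟙 X.A ∧
    etaR D X.A X.M ≫ ((X.ν ⊗ₘ 𝟙 X.M) ≫ X.act) = 𝟙 X.M ∧
    D.S.map X.ν ≫ X.ν = D.μ X.A ≫ X.ν ∧
    (D.S.map X.ν ⊗ₘ ((X.ν ⊗ₘ 𝟙 X.M) ≫ X.act)) ≫ ((X.ν ⊗ₘ 𝟙 X.M) ≫ X.act) =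
      muR D X.A X.M ≫ ((X.ν ⊗ₘ 𝟙 X.M) ≫ X.act) := by
  refine ⟨?_, X.alg_unit, ?_, X.alg_mul, ?_⟩
  · -- square
    have h : (𝟙 (D.S.obj X.A) ⊗ₘ X.Dmap) ≫ (X.ν ⊗ₘ 𝟙 X.M) = X.ν ⊗ₘ X.Dmap := by
      rw [tensorHom_comp_tensorHom, Category.id_comp, Category.comp_id]
    rw [Sbar, Category.assoc, ← Category.assoc (𝟙 (D.S.obj X.A) ⊗ₘ X.Dmap), h,
      ← Category.assoc, Category.assoc]
    exact X.chain.symm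
  · -- unit
    rw [etaR, Category.assoc, ← Category.assoc (D.u X.A ⊗ₘ 𝟙 X.M),
      tensorHom_comp_tensorHom, Category.comp_id]
    exact X.act_unit
  · -- multiplication
    have hmul : (X.ν ⊗ₘ X.ν) ≫ ((D.η X.A ⊗ₘ D.η X.A) ≫ D.m X.A ≫ X.ν) =
        D.m X.A ≫ X.ν := by
      slice_lhs 1 2 => rw [tensorHom_comp_tensorHom, D.η_natural, ← tensorHom_comp_tensorHom]
      slice_lhs 2 3 => rw [D.m_natural]
      slice_lhs 3 4 => rw [X.alg_mul]
      slice_lhs 2 3 => rw [← D.μ_mul]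
      slice_lhs 1 2 => rw [tensorHom_comp_tensorHom, D.left_unit, MonoidalCategory.id_tensorHom_id]
      simp only [Category.id_comp]
    rw [muR]
    have l1 : (D.S.map X.ν ⊗ₘ ((X.ν ⊗ₘ 𝟙 X.M) ≫ X.act)) =
        (D.S.map X.ν ⊗ₘ (X.ν ⊗ₘ 𝟙 X.M)) ≫ (𝟙 (D.S.obj X.A) ⊗ₘ X.act) := by
      rw [tensorHom_comp_tensorHom, Category.comp_id]
    rw [l1]
    have l2 : (𝟙 (D.S.obj X.A) ⊗ₘ X.act) ≫ (X.ν ⊗ₘ 𝟙 X.M) =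
        (X.ν ⊗ₘ 𝟙 (X.A ⊗ X.M)) ≫ (𝟙 X.A ⊗ₘ X.act) := by
      rw [tensorHom_comp_tensorHom, tensorHom_comp_tensorHom]
      simp only [Category.id_comp, Category.comp_id]
    slice_lhs 2 3 => rw [l2]
    slice_lhs 3 4 => rw [X.act_assoc]
    have l3 : (D.S.map X.ν ⊗ₘ (X.ν ⊗ₘ 𝟙 X.M)) ≫ (X.ν ⊗ₘ 𝟙 (X.A ⊗ X.M)) =
        (D.μ X.A ⊗ₘ 𝟙 (D.S.obj X.A ⊗ X.M)) ≫ (X.ν ⊗ₘ (X.ν ⊗ₘ 𝟙 X.M)) := by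
      rw [tensorHom_comp_tensorHom, tensorHom_comp_tensorHom]
      simp only [Category.id_comp, Category.comp_id]
      rw [X.alg_mul]
    rw [← Category.assoc, l3, Category.assoc, associator_inv_naturality_assoc,
      ← Category.assoc ((X.ν ⊗ₘ X.ν) ⊗ₘ 𝟙 X.M), tensorHom_comp_tensorHom, hmul]
    simp only [Category.comp_id]
    have l4 : ((D.m X.A ≫ X.ν) ⊗ₘ 𝟙 X.M) = (D.m X.A ⊗ₘ 𝟙 X.M) ≫ (X.ν ⊗ₘ 𝟙 X.M) := by
      rw [tensorHom_comp_tensorHom, Category.comp_id]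
    rw [l4]
    simp only [Category.assoc]
end

section
/- The category of commutative monoids in the arrow category (Arr(𝕏), ⊠) is isomorphic to the category DER(𝕏) of derivations in 𝕏: every commutative monoid in Arr(𝕏) is of the form ((D : A → M), (m, [α, α ∘ σ]), (u, 0)) for a unique derivation D : (A, m, u) → (M, α), and monoid morphisms correspond to derivation morphisms. -/
open CategoryTheory MonoidalCategory

universe v u

variable {C : Type u} [Category.{v} C] [MonoidalCategory C] [SymmetricCategory C]
  [AdditiveMonoidal C]

/-- Finite biproducts for a category enriched in commutative monoids, together
with a zero object. -/
structure Biprods (C : Type u) [Category.{v} C] [AdditiveHoms C] where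
  obj : C → C → C
  inl : ∀ X Y : C, X ⟶ obj X Y
  inr : ∀ X Y : C, Y ⟶ obj X Y
  fst : ∀ X Y : C, obj X Y ⟶ X
  snd : ∀ X Y : C, obj X Y ⟶ Y
  inl_fst : ∀ X Y : C, inl X Y ≫ fst X Y = 𝟙 X
  inl_snd : ∀ X Y : C, inl X Y ≫ snd X Y = 0
  inr_fst : ∀ X Y : C, inr X Y ≫ fst X Y = 0
  inr_snd : ∀ X Y : C, inr X Y ≫ snd X Y = 𝟙 Y
  total : ∀ X Y : C, fst X Y ≫ inl X Y + snd X Y ≫ inr X Y = 𝟙 (obj X Y)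
  zero : C
  zero_id : 𝟙 zero = 0

variable {C : Type u} [Category.{v} C] [AdditiveHoms C]

/-- The matrix map `[f, g]` out of a biproduct. -/
def Biprods.desc (Bi : Biprods C) {X Y Z : C} (f : X ⟶ Z) (g : Y ⟶ Z) :
    Bi.obj X Y ⟶ Z :=
  Bi.fst X Y ≫ f + Bi.snd X Y ≫ g

variable [MonoidalCategory C]

/-- The pushout-product (Leibniz) tensor on arrows, on objects:
`(φ ⊠ ψ) = [1 ⊗ ψ; φ ⊗ 1] : A₀ ⊗ B₀ ⟶ (A₀ ⊗ B₁) ⊕ (A₁ ⊗ B₀)`. -/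
def boxObjHom (Bi : Biprods C) {A₀ A₁ B₀ B₁ : C} (φ : A₀ ⟶ A₁) (ψ : B₀ ⟶ B₁) :
    A₀ ⊗ B₀ ⟶ Bi.obj (A₀ ⊗ B₁) (A₁ ⊗ B₀) :=
  (𝟙 A₀ ⊗ₘ ψ) ≫ Bi.inl (A₀ ⊗ B₁) (A₁ ⊗ B₀) + (φ ⊗ₘ 𝟙 B₀) ≫ Bi.inr (A₀ ⊗ B₁) (A₁ ⊗ B₀)

/-- The right component of the pushout-product of two squares. -/
def boxHomRight (Bi : Biprods C) {X₀ X₁ X₀' X₁' Y₀ Y₁ Y₀' Y₁' : C}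
    (f₀ : X₀ ⟶ X₀') (f₁ : X₁ ⟶ X₁') (g₀ : Y₀ ⟶ Y₀') (g₁ : Y₁ ⟶ Y₁') :
    Bi.obj (X₀ ⊗ Y₁) (X₁ ⊗ Y₀) ⟶ Bi.obj (X₀' ⊗ Y₁') (X₁' ⊗ Y₀') :=
  Bi.desc ((f₀ ⊗ₘ g₁) ≫ Bi.inl _ _) ((f₁ ⊗ₘ g₀) ≫ Bi.inr _ _)

variable [SymmetricCategory C] [AdditiveMonoidal C]

/-- Raw data of a commutative monoid in the arrow category `(Arr(C), ⊠)` on an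
arrow `φ : A₀ ⟶ A₁`: multiplication `(m₀, [m₁ m₂])` and unit `(u₀, u₁)`. -/
structure ArrCMonData (Bi : Biprods C) where
  A₀ : C
  A₁ : C
  φ : A₀ ⟶ A₁
  m₀ : A₀ ⊗ A₀ ⟶ A₀
  m₁ : A₀ ⊗ A₁ ⟶ A₁
  m₂ : A₁ ⊗ A₀ ⟶ A₁
  u₀ : 𝟙_ C ⟶ A₀
  u₁ : Bi.zero ⟶ A₁

/-- The commutative monoid axioms in `(Arr(C), ⊠)`, expanded componentwise:
the multiplication and unit are arrow-category maps, and the associativity,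
unitality and commutativity diagrams hold in each component. -/
def IsArrCMon (Bi : Biprods C) (X : ArrCMonData Bi) : Prop :=
  -- the multiplication is a map in the arrow category
  boxObjHom Bi X.φ X.φ ≫ Bi.desc X.m₁ X.m₂ = X.m₀ ≫ X.φ ∧
  -- the unit is a map in the arrow category
  (0 : 𝟙_ C ⟶ Bi.zero) ≫ X.u₁ = X.u₀ ≫ X.φ ∧
  -- associativity, first component
  (X.m₀ ⊗ₘ 𝟙 X.A₀) ≫ X.m₀ = (α_ X.A₀ X.A₀ X.A₀).hom ≫ (𝟙 X.A₀ ⊗ₘ X.m₀) ≫ X.m₀ ∧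
  -- associativity, second component (one equation for each biproduct summand)
  (𝟙 X.A₀ ⊗ₘ X.m₁) ≫ X.m₁ = (α_ X.A₀ X.A₀ X.A₁).inv ≫ (X.m₀ ⊗ₘ 𝟙 X.A₁) ≫ X.m₁ ∧
  (𝟙 X.A₀ ⊗ₘ X.m₂) ≫ X.m₁ = (α_ X.A₀ X.A₁ X.A₀).inv ≫ (X.m₁ ⊗ₘ 𝟙 X.A₀) ≫ X.m₂ ∧
  (𝟙 X.A₁ ⊗ₘ X.m₀) ≫ X.m₂ = (α_ X.A₁ X.A₀ X.A₀).inv ≫ (X.m₂ ⊗ₘ 𝟙 X.A₀) ≫ X.m₂ ∧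
  -- unitality, first component
  (λ_ X.A₀).inv ≫ (X.u₀ ⊗ₘ 𝟙 X.A₀) ≫ X.m₀ = 𝟙 X.A₀ ∧
  (ρ_ X.A₀).inv ≫ (𝟙 X.A₀ ⊗ₘ X.u₀) ≫ X.m₀ = 𝟙 X.A₀ ∧
  -- unitality, second component
  (λ_ X.A₁).inv ≫ (X.u₀ ⊗ₘ 𝟙 X.A₁) ≫ X.m₁ = 𝟙 X.A₁ ∧
  (ρ_ X.A₁).inv ≫ (𝟙 X.A₁ ⊗ₘ X.u₀) ≫ X.m₂ = 𝟙 X.A₁ ∧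
  -- commutativity, first component
  (β_ X.A₀ X.A₀).hom ≫ X.m₀ = X.m₀ ∧
  -- commutativity, second component (one equation for each biproduct summand)
  (β_ X.A₀ X.A₁).hom ≫ X.m₂ = X.m₁ ∧
  (β_ X.A₁ X.A₀).hom ≫ X.m₁ = X.m₂

/-- Raw data of a derivation in `C`: a commutative monoid `(A, m, u)`, a module
`(M, act)` and a map `Dmap : A ⟶ M`. -/
structure DerivationData (C : Type u) [Category.{v} C] [MonoidalCategory C] where
  A : C
  M : C
  m : A ⊗ A ⟶ A
  u : 𝟙_ C ⟶ A
  act : A ⊗ M ⟶ M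
  Dmap : A ⟶ M

/-- The derivation axioms: monoid axioms, module axioms, the constant rule
`D ∘ u = 0` and the Leibniz rule. -/
def IsDerivation (Y : DerivationData C) : Prop :=
  (Y.m ⊗ₘ 𝟙 Y.A) ≫ Y.m = (α_ Y.A Y.A Y.A).hom ≫ (𝟙 Y.A ⊗ₘ Y.m) ≫ Y.m ∧
  (λ_ Y.A).inv ≫ (Y.u ⊗ₘ 𝟙 Y.A) ≫ Y.m = 𝟙 Y.A ∧
  (ρ_ Y.A).inv ≫ (𝟙 Y.A ⊗ₘ Y.u) ≫ Y.m = 𝟙 Y.A ∧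
  (β_ Y.A Y.A).hom ≫ Y.m = Y.m ∧
  (λ_ Y.M).inv ≫ (Y.u ⊗ₘ 𝟙 Y.M) ≫ Y.act = 𝟙 Y.M ∧
  (𝟙 Y.A ⊗ₘ Y.act) ≫ Y.act = (α_ Y.A Y.A Y.M).inv ≫ (Y.m ⊗ₘ 𝟙 Y.M) ≫ Y.act ∧
  Y.u ≫ Y.Dmap = 0 ∧
  Y.m ≫ Y.Dmap =
    (𝟙 Y.A ⊗ₘ Y.Dmap) ≫ Y.act + (Y.Dmap ⊗ₘ 𝟙 Y.A) ≫ (β_ Y.M Y.A).hom ≫ Y.act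

/-- Morphisms of commutative monoids in the arrow category, componentwise. -/
def IsMonHom (Bi : Biprods C) (X X' : ArrCMonData Bi)
    (f₀ : X.A₀ ⟶ X'.A₀) (f₁ : X.A₁ ⟶ X'.A₁) : Prop :=
  X.φ ≫ f₁ = f₀ ≫ X'.φ ∧
  (f₀ ⊗ₘ f₀) ≫ X'.m₀ = X.m₀ ≫ f₀ ∧
  (f₀ ⊗ₘ f₁) ≫ X'.m₁ = X.m₁ ≫ f₁ ∧
  (f₁ ⊗ₘ f₀) ≫ X'.m₂ = X.m₂ ≫ f₁ ∧
  X.u₀ ≫ f₀ = X'.u₀ ∧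
  X.u₁ ≫ f₁ = X'.u₁

/-- Morphisms of derivations: a monoid morphism `f` and a map `g` compatible
with the module actions and the derivations. -/
def IsDerMorphism (Y Y' : DerivationData C) (f : Y.A ⟶ Y'.A) (g : Y.M ⟶ Y'.M) :
    Prop :=
  (f ⊗ₘ f) ≫ Y'.m = Y.m ≫ f ∧
  Y.u ≫ f = Y'.u ∧
  (f ⊗ₘ g) ≫ Y'.act = Y.act ≫ g ∧
  Y.Dmap ≫ g = f ≫ Y'.Dmap

/-- From commutative monoids in the arrow category to derivations. -/
def arrCMonToDer (Bi : Biprods C) (X : ArrCMonData Bi) : DerivationData C :=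
  ⟨X.A₀, X.A₁, X.m₀, X.u₀, X.m₁, X.φ⟩

/-- From derivations to commutative monoids in the arrow category,
`D ↦ ((D : A → M), (m, [α, α ∘ σ]), (u, 0))`. -/
def derToArrCMon (Bi : Biprods C) (Y : DerivationData C) : ArrCMonData Bi :=
  ⟨Y.A, Y.M, Y.Dmap, Y.m, Y.act, (β_ Y.M Y.A).hom ≫ Y.act, Y.u, 0⟩

section Aux

open AdditiveHoms AdditiveMonoidal BraidedCategory

lemma zero_src (Bi : Biprods C) {Z : C} (h : Bi.zero ⟶ Z) : h = 0 := by
  rw [← Category.id_comp h, Bi.zero_id, AdditiveHoms.zero_comp']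

lemma inl_desc (Bi : Biprods C) {X Y Z : C} (f : X ⟶ Z) (g : Y ⟶ Z) :
    Bi.inl X Y ≫ Bi.desc f g = f := by
  simp only [Biprods.desc, AdditiveHoms.comp_add, ← Category.assoc, Bi.inl_fst, Bi.inl_snd,
    Category.id_comp, AdditiveHoms.zero_comp']
  rw [add_zero]

lemma inr_desc (Bi : Biprods C) {X Y Z : C} (f : X ⟶ Z) (g : Y ⟶ Z) :
    Bi.inr X Y ≫ Bi.desc f g = g := by
  simp only [Biprods.desc, AdditiveHoms.comp_add, ← Category.assoc, Bi.inr_fst, Bi.inr_snd,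
    Category.id_comp, AdditiveHoms.zero_comp']
  rw [zero_add]

lemma box_desc (Bi : Biprods C) {A₀ A₁ B₀ B₁ Z : C} (φ : A₀ ⟶ A₁) (ψ : B₀ ⟶ B₁)
    (f : A₀ ⊗ B₁ ⟶ Z) (g : A₁ ⊗ B₀ ⟶ Z) :
    boxObjHom Bi φ ψ ≫ Bi.desc f g = (𝟙 A₀ ⊗ₘ ψ) ≫ f + (φ ⊗ₘ 𝟙 B₀) ≫ g := by
  simp only [boxObjHom, AdditiveHoms.add_comp, Category.assoc, inl_desc, inr_desc]

lemma coh_b (A M : C) :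
    (𝟙 A ⊗ₘ (β_ M A).hom) ≫ (α_ A A M).inv ≫ ((β_ A A).hom ⊗ₘ 𝟙 M) =
    (α_ A M A).inv ≫ (β_ (A ⊗ M) A).hom ≫ (α_ A A M).inv := by
  simp [MonoidalCategory.tensorHom_def]

lemma coh_c (A M : C) :
    (β_ M (A ⊗ A)).hom ≫ ((β_ A A).hom ⊗ₘ 𝟙 M) =
    (α_ M A A).inv ≫ ((β_ M A).hom ⊗ₘ 𝟙 A) ≫ (β_ (A ⊗ M) A).hom ≫ (α_ A A M).inv := by
  simp [MonoidalCategory.tensorHom_def]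

end Aux

/-- The category of commutative monoids in `(Arr(C), ⊠)` is
isomorphic to the category `DER(C)` of derivations in `C`: the two assignments
above are mutually inverse on objects, and monoid morphisms correspond exactly
to derivation morphisms. -/
theorem cmon_arrow_iso_der (Bi : Biprods C) :
    (∀ X : ArrCMonData Bi, IsArrCMon Bi X → IsDerivation (arrCMonToDer Bi X)) ∧
    (∀ Y : DerivationData C, IsDerivation Y → IsArrCMon Bi (derToArrCMon Bi Y)) ∧
    (∀ X : ArrCMonData Bi, IsArrCMon Bi X → derToArrCMon Bi (arrCMonToDer Bi X) = X) ∧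
    (∀ Y : DerivationData C, IsDerivation Y → arrCMonToDer Bi (derToArrCMon Bi Y) = Y) ∧
    (∀ (X X' : ArrCMonData Bi), IsArrCMon Bi X → IsArrCMon Bi X' →
      ∀ (f₀ : X.A₀ ⟶ X'.A₀) (f₁ : X.A₁ ⟶ X'.A₁),
        IsMonHom Bi X X' f₀ f₁ ↔
          IsDerMorphism (arrCMonToDer Bi X) (arrCMonToDer Bi X') f₀ f₁) := by
  classical
  refine ⟨?_, ?_, ?_, ?_, ?_⟩
  · -- ArrCMon → Derivation
    rintro X ⟨h1, h2, h3, h4, h5, h6, h7, h8, h9, h10, h11, h12, h13⟩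
    refine ⟨h3, h7, h8, h11, h9, h4, ?_, ?_⟩
    · show X.u₀ ≫ X.φ = 0
      rw [← h2, AdditiveHoms.zero_comp']
    · show X.m₀ ≫ X.φ = (𝟙 X.A₀ ⊗ₘ X.φ) ≫ X.m₁ +
        (X.φ ⊗ₘ 𝟙 X.A₀) ≫ (β_ X.A₁ X.A₀).hom ≫ X.m₁
      rw [← h1, box_desc, h13]
  · -- Derivation → ArrCMon
    rintro Y ⟨g1, g2, g3, g4, g5, g6, g7, g8⟩
    have hb : (Y.act ⊗ₘ 𝟙 Y.A) ≫ (β_ Y.M Y.A).hom =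
        (β_ (Y.A ⊗ Y.M) Y.A).hom ≫ (𝟙 Y.A ⊗ₘ Y.act) :=
      BraidedCategory.braiding_naturality Y.act (𝟙 Y.A)
    have hcm : ((β_ Y.A Y.A).hom ⊗ₘ 𝟙 Y.M) ≫ (Y.m ⊗ₘ 𝟙 Y.M) = (Y.m ⊗ₘ 𝟙 Y.M) := by
      rw [MonoidalCategory.tensorHom_comp_tensorHom, g4, Category.comp_id]
    refine ⟨?_, ?_, g1, g6, ?_, ?_, g2, g3, g5, ?_, g4, ?_, rfl⟩
    · show boxObjHom Bi Y.Dmap Y.Dmap ≫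
        Bi.desc Y.act ((β_ Y.M Y.A).hom ≫ Y.act) = Y.m ≫ Y.Dmap
      rw [box_desc]
      exact g8.symm
    · show (0 : 𝟙_ C ⟶ Bi.zero) ≫ (0 : Bi.zero ⟶ Y.M) = Y.u ≫ Y.Dmap
      rw [AdditiveHoms.comp_zero', g7]
    · -- assoc, mixed component (b)
      show (𝟙 Y.A ⊗ₘ (β_ Y.M Y.A).hom ≫ Y.act) ≫ Y.act =
        (α_ Y.A Y.M Y.A).inv ≫ (Y.act ⊗ₘ 𝟙 Y.A) ≫ (β_ Y.M Y.A).hom ≫ Y.act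
      calc (𝟙 Y.A ⊗ₘ (β_ Y.M Y.A).hom ≫ Y.act) ≫ Y.act
          = (𝟙 Y.A ⊗ₘ (β_ Y.M Y.A).hom) ≫ (𝟙 Y.A ⊗ₘ Y.act) ≫ Y.act := by
            rw [← Category.assoc, MonoidalCategory.tensorHom_comp_tensorHom, Category.comp_id]
        _ = (𝟙 Y.A ⊗ₘ (β_ Y.M Y.A).hom) ≫ (α_ Y.A Y.A Y.M).inv ≫
              (Y.m ⊗ₘ 𝟙 Y.M) ≫ Y.act := by rw [g6]
        _ = (𝟙 Y.A ⊗ₘ (β_ Y.M Y.A).hom) ≫ (α_ Y.A Y.A Y.M).inv ≫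
              ((β_ Y.A Y.A).hom ⊗ₘ 𝟙 Y.M) ≫ (Y.m ⊗ₘ 𝟙 Y.M) ≫ Y.act := by
            rw [← Category.assoc ((β_ Y.A Y.A).hom ⊗ₘ 𝟙 Y.M), hcm]
        _ = ((α_ Y.A Y.M Y.A).inv ≫ (β_ (Y.A ⊗ Y.M) Y.A).hom ≫
              (α_ Y.A Y.A Y.M).inv) ≫ (Y.m ⊗ₘ 𝟙 Y.M) ≫ Y.act := by
            rw [← coh_b]
            simp only [Category.assoc]
        _ = (α_ Y.A Y.M Y.A).inv ≫ (β_ (Y.A ⊗ Y.M) Y.A).hom ≫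
              (𝟙 Y.A ⊗ₘ Y.act) ≫ Y.act := by
            simp only [Category.assoc, g6]
        _ = (α_ Y.A Y.M Y.A).inv ≫ (Y.act ⊗ₘ 𝟙 Y.A) ≫ (β_ Y.M Y.A).hom ≫ Y.act := by
            rw [← Category.assoc (β_ (Y.A ⊗ Y.M) Y.A).hom, ← hb, Category.assoc]
    · -- assoc, mixed component (c)
      show (𝟙 Y.M ⊗ₘ Y.m) ≫ (β_ Y.M Y.A).hom ≫ Y.act =
        (α_ Y.M Y.A Y.A).inv ≫ (((β_ Y.M Y.A).hom ≫ Y.act) ⊗ₘ 𝟙 Y.A) ≫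
          (β_ Y.M Y.A).hom ≫ Y.act
      have hn : (𝟙 Y.M ⊗ₘ Y.m) ≫ (β_ Y.M Y.A).hom =
          (β_ Y.M (Y.A ⊗ Y.A)).hom ≫ (Y.m ⊗ₘ 𝟙 Y.M) :=
        BraidedCategory.braiding_naturality (𝟙 Y.M) Y.m
      calc (𝟙 Y.M ⊗ₘ Y.m) ≫ (β_ Y.M Y.A).hom ≫ Y.act
          = (β_ Y.M (Y.A ⊗ Y.A)).hom ≫ (Y.m ⊗ₘ 𝟙 Y.M) ≫ Y.act := by
            rw [← Category.assoc, hn, Category.assoc]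
        _ = (β_ Y.M (Y.A ⊗ Y.A)).hom ≫ ((β_ Y.A Y.A).hom ⊗ₘ 𝟙 Y.M) ≫
              (Y.m ⊗ₘ 𝟙 Y.M) ≫ Y.act := by
            rw [← Category.assoc ((β_ Y.A Y.A).hom ⊗ₘ 𝟙 Y.M), hcm]
        _ = ((α_ Y.M Y.A Y.A).inv ≫ ((β_ Y.M Y.A).hom ⊗ₘ 𝟙 Y.A) ≫
              (β_ (Y.A ⊗ Y.M) Y.A).hom ≫ (α_ Y.A Y.A Y.M).inv) ≫
              (Y.m ⊗ₘ 𝟙 Y.M) ≫ Y.act := by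
            rw [← Category.assoc, ← Category.assoc, coh_c]
            simp only [Category.assoc]
        _ = (α_ Y.M Y.A Y.A).inv ≫ ((β_ Y.M Y.A).hom ⊗ₘ 𝟙 Y.A) ≫
              (β_ (Y.A ⊗ Y.M) Y.A).hom ≫ (𝟙 Y.A ⊗ₘ Y.act) ≫ Y.act := by
            simp only [Category.assoc, g6]
        _ = (α_ Y.M Y.A Y.A).inv ≫ ((β_ Y.M Y.A).hom ⊗ₘ 𝟙 Y.A) ≫
              (Y.act ⊗ₘ 𝟙 Y.A) ≫ (β_ Y.M Y.A).hom ≫ Y.act := by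
            rw [← Category.assoc (β_ (Y.A ⊗ Y.M) Y.A).hom, ← hb, Category.assoc]
        _ = (α_ Y.M Y.A Y.A).inv ≫ (((β_ Y.M Y.A).hom ≫ Y.act) ⊗ₘ 𝟙 Y.A) ≫
              (β_ Y.M Y.A).hom ≫ Y.act := by
            rw [← Category.assoc ((β_ Y.M Y.A).hom ⊗ₘ 𝟙 Y.A),
              MonoidalCategory.tensorHom_comp_tensorHom, Category.comp_id]
    · -- right unit, second component
      show (ρ_ Y.M).inv ≫ (𝟙 Y.M ⊗ₘ Y.u) ≫ (β_ Y.M Y.A).hom ≫ Y.act = 𝟙 Y.M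
      have hn : (𝟙 Y.M ⊗ₘ Y.u) ≫ (β_ Y.M Y.A).hom =
          (β_ Y.M (𝟙_ C)).hom ≫ (Y.u ⊗ₘ 𝟙 Y.M) :=
        BraidedCategory.braiding_naturality (𝟙 Y.M) Y.u
      rw [← Category.assoc (𝟙 Y.M ⊗ₘ Y.u), hn, braiding_tensorUnit_right]
      simp only [Category.assoc, Iso.inv_hom_id_assoc]
      exact g5
    · -- commutativity, mixed component
      show (β_ Y.A Y.M).hom ≫ (β_ Y.M Y.A).hom ≫ Y.act = Y.act
      rw [← Category.assoc, SymmetricCategory.symmetry, Category.id_comp]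
  · -- roundtrip on ArrCMon
    rintro X ⟨-, -, -, -, -, -, -, -, -, -, -, -, h13⟩
    have hu : X.u₁ = 0 := zero_src Bi X.u₁
    cases X
    simp only [derToArrCMon, arrCMonToDer] at *
    rw [h13, hu]
    congr 1
  · -- roundtrip on Derivation
    rintro Y -
    rfl
  · -- morphisms correspond
    rintro X X' ⟨-, -, -, -, -, -, -, -, -, -, -, -, h13⟩
      ⟨-, -, -, -, -, -, -, -, -, -, -, -, h13'⟩ f₀ f₁
    constructor
    · rintro ⟨k1, k2, k3, k4, k5, k6⟩
      exact ⟨k2, k5, k3, k1⟩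
    · rintro ⟨d1, d2, d3, d4⟩
      refine ⟨d4, d1, d3, ?_, d2, ?_⟩
      · -- mixed multiplication component
        simp only [arrCMonToDer] at d3
        rw [← h13, ← h13', ← Category.assoc,
          BraidedCategory.braiding_naturality f₁ f₀, Category.assoc, d3,
          ← Category.assoc]
      · rw [zero_src Bi X.u₁, zero_src Bi X'.u₁, AdditiveHoms.zero_comp']
end

section
/- If the Seely maps χ_{A,B} : S(A) ⊗ S(B) → S(A ⊕ B) and χ₀ : I → S(0) of the differential modality S are isomorphisms, then the induced Seely maps χ̄ and χ̄₀ of the lifted differential modality S̄ on the arrow category are also isomorphisms; hence if S is a differential storage modality, so is S̄. -/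
open CategoryTheory MonoidalCategory

universe v u

variable {C : Type u} [Category.{v} C] [MonoidalCategory C] [SymmetricCategory C]
  [AdditiveMonoidal C]

variable {C : Type u} [Category.{v} C] [AdditiveHoms C]

variable [MonoidalCategory C]

variable [SymmetricCategory C] [AdditiveMonoidal C]

/-- The Seely map `χ_{A,A'} = m ∘ (S(inj₁) ⊗ S(inj₂)) : S(A) ⊗ S(A') ⟶ S(A ⊕ A')`. -/
def seely (Bi : Biprods C) (D : DiffModality C) (A A' : C) :
    D.S.obj A ⊗ D.S.obj A' ⟶ D.S.obj (Bi.obj A A') :=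
  (D.S.map (Bi.inl A A') ⊗ₘ D.S.map (Bi.inr A A')) ≫ D.m (Bi.obj A A')

/-- The right component of the lifted Seely map `χ̄` on the arrow category, at
arrows `φ : A₀ ⟶ A₁` and `ψ : B₀ ⟶ B₁`:
`[χ ⊗ 1_{B₁}, (χ ⊗ 1_{A₁}) ∘ (1 ⊗ σ)]` followed by the biproduct injections. -/
def seelyBarRight (Bi : Biprods C) (D : DiffModality C) (A₀ A₁ B₀ B₁ : C) :
    Bi.obj (D.S.obj A₀ ⊗ (D.S.obj B₀ ⊗ B₁)) ((D.S.obj A₀ ⊗ A₁) ⊗ D.S.obj B₀) ⟶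
      D.S.obj (Bi.obj A₀ B₀) ⊗ Bi.obj A₁ B₁ :=
  Bi.desc
    ((α_ (D.S.obj A₀) (D.S.obj B₀) B₁).inv ≫ (seely Bi D A₀ B₀ ⊗ₘ 𝟙 B₁) ≫
      (𝟙 (D.S.obj (Bi.obj A₀ B₀)) ⊗ₘ Bi.inr A₁ B₁))
    ((α_ (D.S.obj A₀) A₁ (D.S.obj B₀)).hom ≫
      (𝟙 (D.S.obj A₀) ⊗ₘ (β_ A₁ (D.S.obj B₀)).hom) ≫
      (α_ (D.S.obj A₀) (D.S.obj B₀) A₁).inv ≫ (seely Bi D A₀ B₀ ⊗ₘ 𝟙 A₁) ≫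
      (𝟙 (D.S.obj (Bi.obj A₀ B₀)) ⊗ₘ Bi.inl A₁ B₁))

section Aux

set_option linter.unusedSectionVars false

/-- The zero of the second (`AdditiveMonoidal`-derived) hom-monoid structure. -/
abbrev z2 (X Y : C) : X ⟶ Y :=
  @OfNat.ofNat (X ⟶ Y) 0 (@Zero.toOfNat0 (X ⟶ Y) (@AddMonoid.toZero (X ⟶ Y)
    (@AddCommMonoid.toAddMonoid (X ⟶ Y)
      (@AdditiveHoms.homMon C _ (@AdditiveMonoidal.toAdditiveHoms C _ _ _) X Y))))

/-- The addition of the second (`AdditiveMonoidal`-derived) hom-monoid structure. -/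
abbrev a2 {X Y : C} (f g : X ⟶ Y) : X ⟶ Y :=
  @HAdd.hAdd _ _ _ (@instHAdd _ (@AddZero.toAdd _ (@AddZeroClass.toAddZero _ (@AddMonoid.toAddZeroClass _
    (@AddCommMonoid.toAddMonoid _
      (@AdditiveHoms.homMon C _ (@AdditiveMonoidal.toAdditiveHoms C _ _ _) X Y)))))) f g

lemma z2_eq (X Y : C) : z2 (C := C) X Y = 0 := by
  have h1 : z2 X Y ≫ (0 : Y ⟶ Y) = (0 : X ⟶ Y) :=
    AdditiveHoms.comp_zero' (Z := Y) (z2 X Y)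
  have h2 := @AdditiveHoms.zero_comp' C _ (@AdditiveMonoidal.toAdditiveHoms C _ _ _)
    X Y Y (0 : Y ⟶ Y)
  exact h2.symm.trans h1

lemma comp_a2 {P Q R : C} (p : P ⟶ Q) (q r : Q ⟶ R) :
    p ≫ a2 q r = a2 (p ≫ q) (p ≫ r) :=
  @AdditiveHoms.comp_add C _ (@AdditiveMonoidal.toAdditiveHoms C _ _ _) _ _ _ p q r

lemma a2_comp {P Q R : C} (p q : P ⟶ Q) (r : Q ⟶ R) :
    a2 p q ≫ r = a2 (p ≫ r) (q ≫ r) :=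
  @AdditiveHoms.add_comp C _ (@AdditiveMonoidal.toAdditiveHoms C _ _ _) _ _ _ p q r

lemma a2_zero {P Q : C} (p : P ⟶ Q) : a2 p (z2 P Q) = p :=
  @add_zero _ (@AddMonoid.toAddZeroClass _ (@AddCommMonoid.toAddMonoid _
    (@AdditiveHoms.homMon C _ (@AdditiveMonoidal.toAdditiveHoms C _ _ _) P Q))) p

lemma a2_eq (Bi : Biprods C) {X Y : C} (f g : X ⟶ Y) : a2 f g = f + g := by
  set i := Bi.inl Y Y with hi
  set j := Bi.inr Y Y with hj
  have hfst : a2 (f ≫ i) (g ≫ j) ≫ Bi.fst Y Y = f := by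
    rw [a2_comp, Category.assoc, Category.assoc, hi, hj, Bi.inl_fst, Bi.inr_fst,
      Category.comp_id, AdditiveHoms.comp_zero', ← z2_eq, a2_zero]
  have hsnd : a2 (f ≫ i) (g ≫ j) ≫ Bi.snd Y Y = g := by
    rw [a2_comp, Category.assoc, Category.assoc, hi, hj, Bi.inl_snd, Bi.inr_snd,
      Category.comp_id, AdditiveHoms.comp_zero']
    have : a2 (0 : X ⟶ Y) g = a2 (z2 X Y) g := by rw [z2_eq]
    rw [this]
    exact @zero_add _ (@AddMonoid.toAddZeroClass _ (@AddCommMonoid.toAddMonoid _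
      (@AdditiveHoms.homMon C _ (@AdditiveMonoidal.toAdditiveHoms C _ _ _) X Y))) g
  -- step †: the two "pairings" agree
  have step1 : a2 (f ≫ i) (g ≫ j) = f ≫ i + g ≫ j := by
    conv_lhs => rw [← Category.comp_id (a2 (f ≫ i) (g ≫ j)), ← Bi.total Y Y]
    rw [AdditiveHoms.comp_add, ← Category.assoc, ← Category.assoc, hfst, hsnd]
  -- postcompose with the codiagonal
  have hic : i ≫ (Bi.fst Y Y + Bi.snd Y Y) = 𝟙 Y := by
    rw [AdditiveHoms.comp_add, hi, Bi.inl_fst, Bi.inl_snd, add_zero]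
  have hjc : j ≫ (Bi.fst Y Y + Bi.snd Y Y) = 𝟙 Y := by
    rw [AdditiveHoms.comp_add, hj, Bi.inr_fst, Bi.inr_snd, zero_add]
  have := congrArg (· ≫ (Bi.fst Y Y + Bi.snd Y Y)) step1
  simp only [a2_comp, AdditiveHoms.add_comp, Category.assoc, hic, hjc,
    Category.comp_id] at this
  exact this

lemma tensor_zero3 {W X Y Z : C} (f : W ⟶ X) : f ⊗ₘ (0 : Y ⟶ Z) = 0 := by
  rw [← z2_eq Y Z, ← z2_eq (W ⊗ Y) (X ⊗ Z)]
  exact AdditiveMonoidal.tensor_zero f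

lemma tensor_add3 (Bi : Biprods C) {W X Y Z : C} (f : W ⟶ X) (g h : Y ⟶ Z) :
    f ⊗ₘ (g + h) = f ⊗ₘ g + f ⊗ₘ h := by
  rw [← a2_eq Bi g h, ← a2_eq Bi (f ⊗ₘ g) (f ⊗ₘ h)]
  exact AdditiveMonoidal.tensor_add f g h

lemma tens_comp (T : C) {A B Z W : C} (a : A ⟶ B) (b : B ⟶ Z) (h : T ⊗ Z ⟶ W) :
    (𝟙 T ⊗ₘ a) ≫ (𝟙 T ⊗ₘ b) ≫ h = (𝟙 T ⊗ₘ (a ≫ b)) ≫ h := by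
  rw [← Category.assoc, tensorHom_comp_tensorHom, Category.comp_id]

lemma tens_comp' (T : C) {A B Z : C} (a : A ⟶ B) (b : B ⟶ Z) :
    (𝟙 T ⊗ₘ a) ≫ (𝟙 T ⊗ₘ b) = 𝟙 T ⊗ₘ (a ≫ b) := by
  rw [tensorHom_comp_tensorHom, Category.comp_id]

lemma inl_fst_assoc (Bi : Biprods C) (X Y : C) {Z : C} (h : X ⟶ Z) :
    Bi.inl X Y ≫ Bi.fst X Y ≫ h = h := by
  rw [← Category.assoc, Bi.inl_fst, Category.id_comp]

lemma inr_snd_assoc (Bi : Biprods C) (X Y : C) {Z : C} (h : Y ⟶ Z) :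
    Bi.inr X Y ≫ Bi.snd X Y ≫ h = h := by
  rw [← Category.assoc, Bi.inr_snd, Category.id_comp]

lemma inl_snd_assoc (Bi : Biprods C) (X Y : C) {Z : C} (h : Y ⟶ Z) :
    Bi.inl X Y ≫ Bi.snd X Y ≫ h = 0 := by
  rw [← Category.assoc, Bi.inl_snd, AdditiveHoms.zero_comp']

lemma inr_fst_assoc (Bi : Biprods C) (X Y : C) {Z : C} (h : X ⟶ Z) :
    Bi.inr X Y ≫ Bi.fst X Y ≫ h = 0 := by
  rw [← Category.assoc, Bi.inr_fst, AdditiveHoms.zero_comp']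

lemma descIsIso (Bi : Biprods C) {X Y T A B : C} (f : X ⟶ T ⊗ B) (g : Y ⟶ T ⊗ A)
    [IsIso f] [IsIso g] :
    IsIso (Bi.desc (f ≫ (𝟙 T ⊗ₘ Bi.inr A B)) (g ≫ (𝟙 T ⊗ₘ Bi.inl A B))) := by
  refine ⟨⟨(𝟙 T ⊗ₘ Bi.snd A B) ≫ inv f ≫ Bi.inl X Y
      + (𝟙 T ⊗ₘ Bi.fst A B) ≫ inv g ≫ Bi.inr X Y, ?_, ?_⟩⟩
  · simp only [Biprods.desc, AdditiveHoms.add_comp, AdditiveHoms.comp_add,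
      Category.assoc, tens_comp, Bi.inr_snd, Bi.inr_fst, Bi.inl_fst, Bi.inl_snd,
      tensor_zero3, AdditiveHoms.zero_comp', AdditiveHoms.comp_zero',
      id_tensorHom_id, Category.id_comp, IsIso.hom_inv_id_assoc, add_zero, zero_add]
    exact Bi.total X Y
  · simp only [Biprods.desc, AdditiveHoms.add_comp, AdditiveHoms.comp_add,
      Category.assoc, inl_fst_assoc, inl_snd_assoc, inr_fst_assoc, inr_snd_assoc,
      AdditiveHoms.zero_comp', AdditiveHoms.comp_zero',
      IsIso.inv_hom_id_assoc, tens_comp', add_zero, zero_add]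
    rw [← tensor_add3 Bi,
      add_comm (Bi.snd A B ≫ Bi.inr A B) (Bi.fst A B ≫ Bi.inl A B), Bi.total, id_tensorHom_id]

end Aux

/-- If the Seely maps `χ` and `χ₀ = u_0` of the differential
modality `S` are isomorphisms, then the induced Seely maps of the lifted
differential modality `S̄` on the arrow category are isomorphisms (stated
componentwise); hence if `S` is a differential storage modality, so is `S̄`. -/
theorem sbar_storage (Bi : Biprods C) (D : DiffModality C)
    (hχ : ∀ A A' : C, IsIso (seely Bi D A A'))
    (hχ₀ : IsIso (D.u Bi.zero)) :
    ∀ {A₀ A₁ B₀ B₁ : C} (φ : A₀ ⟶ A₁) (ψ : B₀ ⟶ B₁),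
      IsIso (seely Bi D A₀ B₀) ∧
      IsIso (seelyBarRight Bi D A₀ A₁ B₀ B₁) ∧
      IsIso (D.u Bi.zero) ∧
      IsIso (0 : Bi.zero ⟶ D.S.obj Bi.zero ⊗ Bi.zero) := by
  intro A₀ A₁ B₀ B₁ φ ψ
  haveI := hχ A₀ B₀
  refine ⟨hχ A₀ B₀, ?_, hχ₀, ?_⟩
  · have h := descIsIso Bi
      ((α_ (D.S.obj A₀) (D.S.obj B₀) B₁).inv ≫ (seely Bi D A₀ B₀ ⊗ₘ 𝟙 B₁))
      ((α_ (D.S.obj A₀) A₁ (D.S.obj B₀)).hom ≫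
        (𝟙 (D.S.obj A₀) ⊗ₘ (β_ A₁ (D.S.obj B₀)).hom) ≫
        (α_ (D.S.obj A₀) (D.S.obj B₀) A₁).inv ≫ (seely Bi D A₀ B₀ ⊗ₘ 𝟙 A₁))
    simpa only [seelyBarRight, Category.assoc] using h
  · refine ⟨⟨(0 : D.S.obj Bi.zero ⊗ Bi.zero ⟶ Bi.zero), ?_, ?_⟩⟩
    · rw [AdditiveHoms.zero_comp', Bi.zero_id]
    · rw [AdditiveHoms.zero_comp', ← id_tensorHom_id, Bi.zero_id, tensor_zero3]
end
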